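/- arXiv:2504.04486 — 3 statements merged into one kernel-verified Lean document; each statement's English description precedes it below -/
import Mathlib

section
/- Let $A$ be an integral domain and let $f = a_0 + a_1 x + \cdots + a_n x^n \in A[x]$ be divisible by $p^m$ for some $p \in A[x]$ and $m \in \mathbb{N}$. Then for any integers $z_1, z_2 \in \mathbb{Z}$ and any $k \in \mathbb{N}$ with $k \le m$, the polynomial $\sum_{r=0}^n \binom{z_1 + z_2 r}{k} a_r x^r$ is divisible by $p^{m-k}$ in $A[x]$. -/
/-!
The Hasse derivatives `D⁽ʲ⁾` act on `f = ∑ aᵣ Xʳ` by `Xʲ D⁽ʲ⁾ f = ∑ (r choose j) aᵣ Xʳ`, and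
the Leibniz rule shows that `p ^ m ∣ f` implies `p ^ (m - j) ∣ D⁽ʲ⁾ f`. The weight
`r ↦ (z₁ + z₂ r) choose k` is an integer-valued polynomial of degree at most `k` in `r`, so by
Newton's forward-difference formula it is an integer combination of the `r choose j` with
`j ≤ k`. Hence the weighted polynomial is an integer combination of the `Xʲ D⁽ʲ⁾ f`, `j ≤ k`,
each divisible by `p ^ (m - k)`.
-/

open Polynomial Finset fwdDiff
open scoped Nat

/-- Generalized binomial coefficient `z.choose k` for an integer `z`:
`z (z-1) ⋯ (z-k+1) / k!`, which is an integer. -/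
def intChoose (z : ℤ) (k : ℕ) : ℤ :=
  if 0 ≤ z then (z.toNat.choose k : ℤ)
  else (-1) ^ k * (((k : ℤ) - 1 - z).toNat.choose k : ℤ)

lemma intChoose_eq_choose (z : ℤ) (k : ℕ) : intChoose z k = Ring.choose z k := by
  unfold intChoose
  split_ifs with h
  · lift z to ℕ using h
    simp [Ring.choose_natCast]
  · obtain ⟨w, hw⟩ : ∃ w : ℕ, (w : ℤ) = k - 1 - z := ⟨_, Int.toNat_of_nonneg (by omega)⟩
    rw [← hw, Int.toNat_natCast, show z = -((w : ℤ) - k + 1) by omega, Ring.choose_neg,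
      show (w : ℤ) - k + 1 + k - 1 = w by ring, Ring.choose_natCast, Int.negOnePow_def]
    simp [Units.smul_def]

lemma factorial_mul_intChoose (z : ℤ) (k : ℕ) :
    (k ! : ℤ) * intChoose z k = (descPochhammer ℤ k).eval z := by
  rw [intChoose_eq_choose, ← nsmul_eq_mul, ← Ring.descPochhammer_eq_factorial_smul_choose,
    ← eval_eq_smeval]

theorem fwdDiff_iter_eq_zero_of_smul_eq_eval {g : ℤ → ℤ} {P : ℤ[X]} {c : ℤ} (hc : c ≠ 0)
    (hg : c • g = P.eval) {j : ℕ} (hj : P.natDegree < j) : (Δ_[1])^[j] g = 0 := by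
  have : c • (Δ_[1])^[j] g = 0 := by
    rw [← fwdDiff_iter_const_smul, hg, fwdDiff_iter_eq_zero_of_degree_lt hj]
  exact (smul_eq_zero.mp this).resolve_left hc

theorem eq_sum_choose_mul_fwdDiff_iter_of_smul_eq_eval {g : ℤ → ℤ} {P : ℤ[X]} {c : ℤ}
    (hc : c ≠ 0) (hg : c • g = P.eval) {k : ℕ} (hP : P.natDegree ≤ k) (r : ℕ) :
    g r = ∑ j ∈ range (k + 1), (r.choose j : ℤ) * (Δ_[1])^[j] g 0 := by
  have hnewton := shift_eq_sum_fwdDiff_iter 1 g r 0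
  simp only [zero_add, nsmul_eq_mul, mul_one] at hnewton
  rw [hnewton]
  have hsub : ∀ {a b : ℕ}, range (a + 1) ⊆ range (a + b + 1) := fun {a b} =>
    range_subset_range.mpr (by omega)
  rw [sum_subset hsub, ← sum_subset (add_comm k r ▸ hsub)]
  · intro j _ hj
    rw [fwdDiff_iter_eq_zero_of_smul_eq_eval hc hg (by simp only [mem_range] at hj; omega),
      Pi.zero_apply, mul_zero]
  · intro j _ hj
    rw [Nat.choose_eq_zero_of_lt (by simp only [mem_range] at hj; omega), Nat.cast_zero, zero_mul]

theorem exists_intChoose_add_mul_eq_sum_choose_mul (z₁ z₂ : ℤ) (k : ℕ) :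
    ∃ c : ℕ → ℤ, ∀ r : ℕ,
      intChoose (z₁ + z₂ * r) k = ∑ j ∈ range (k + 1), (r.choose j : ℤ) * c j := by
  have hP : ((descPochhammer ℤ k).comp (C z₂ * X + C z₁)).natDegree ≤ k := by
    refine natDegree_comp_le.trans ?_
    rw [descPochhammer_natDegree]
    exact (Nat.mul_le_mul_left k natDegree_linear_le).trans_eq (mul_one k)
  refine ⟨_, eq_sum_choose_mul_fwdDiff_iter_of_smul_eq_eval
    (g := fun x => intChoose (z₁ + z₂ * x) k) (Nat.cast_ne_zero.mpr k.factorial_ne_zero)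
    (funext fun x => ?_) hP⟩
  simp [eval_comp, factorial_mul_intChoose, add_comm]

section HasseDeriv

variable {R : Type*} [CommRing R]

theorem pow_sub_dvd_hasseDeriv_of_pow_dvd {p f : R[X]} {m : ℕ} (h : p ^ m ∣ f) (i : ℕ) :
    p ^ (m - i) ∣ hasseDeriv i f := by
  induction m generalizing f i with
  | zero => simp
  | succ m ih =>
    obtain ⟨g, rfl⟩ := h
    rw [pow_succ', mul_assoc, hasseDeriv_mul]
    refine dvd_sum fun ⟨a, b⟩ hab => ?_
    rw [HasAntidiagonal.mem_antidiagonal] at hab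
    rcases Nat.eq_zero_or_pos a with rfl | ha
    · rw [hasseDeriv_zero']
      calc p ^ (m + 1 - i) ∣ p ^ (m - b + 1) := pow_dvd_pow p (by omega)
        _ = p * p ^ (m - b) := pow_succ' p _
        _ ∣ _ := mul_dvd_mul_left p (ih (dvd_mul_right _ _) b)
    · exact (pow_dvd_pow p (by omega)).trans ((ih (dvd_mul_right _ _) b).mul_left _)

theorem X_pow_mul_hasseDeriv_C_mul_X_pow (a : R) (j r : ℕ) :
    X ^ j * hasseDeriv j (C a * X ^ r) = C (r.choose j • a) * X ^ r := by
  rw [C_mul_X_pow_eq_monomial, hasseDeriv_monomial, ← C_mul_X_pow_eq_monomial, nsmul_eq_mul]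
  rcases le_or_gt j r with h | h
  · rw [mul_left_comm, ← pow_add, Nat.add_sub_cancel' h]
  · simp [Nat.choose_eq_zero_of_lt h]

theorem sum_C_smul_mul_X_pow_eq_sum_X_pow_mul_hasseDeriv (s : Finset ℕ) (a : ℕ → R) {k : ℕ}
    {w c : ℕ → ℤ} (hw : ∀ r, w r = ∑ j ∈ range (k + 1), (r.choose j : ℤ) * c j) :
    ∑ r ∈ s, C (w r • a r) * X ^ r =
      ∑ j ∈ range (k + 1), c j • (X ^ j * hasseDeriv j (∑ r ∈ s, C (a r) * X ^ r)) := by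
  simp only [map_sum, mul_sum, X_pow_mul_hasseDeriv_C_mul_X_pow, smul_sum]
  rw [sum_comm]
  refine sum_congr rfl fun r _ => ?_
  rw [hw, sum_smul, map_sum, sum_mul]
  refine sum_congr rfl fun j _ => ?_
  simp only [zsmul_eq_mul, nsmul_eq_mul, map_mul, map_intCast, map_natCast, Int.cast_mul,
    Int.cast_natCast]
  ring

end HasseDeriv

theorem stmt0_general {A : Type*} [CommRing A]
    (n m : ℕ) (a : ℕ → A) (p : Polynomial A)
    (hdiv : p ^ m ∣ ∑ r ∈ Finset.range (n + 1), Polynomial.C (a r) * Polynomial.X ^ r)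
    (z₁ z₂ : ℤ) (k : ℕ) :
    p ^ (m - k) ∣ ∑ r ∈ Finset.range (n + 1),
      Polynomial.C (intChoose (z₁ + z₂ * (r : ℤ)) k • a r) * Polynomial.X ^ r := by
  obtain ⟨c, hc⟩ := exists_intChoose_add_mul_eq_sum_choose_mul z₁ z₂ k
  rw [sum_C_smul_mul_X_pow_eq_sum_X_pow_mul_hasseDeriv _ a hc]
  refine dvd_sum fun j hj => ?_
  have hdvd : p ^ (m - k) ∣ hasseDeriv j (∑ r ∈ range (n + 1), C (a r) * X ^ r) :=
    (pow_dvd_pow p (by simp only [mem_range] at hj; omega)).trans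
      (pow_sub_dvd_hasseDeriv_of_pow_dvd hdiv j)
  exact dvd_zsmul_of_dvd _ (hdvd.mul_left _)

/-- If `f = a₀ + a₁ x + ⋯ + aₙ xⁿ ∈ A[x]` is divisible by `p ^ m`, then for any
`z₁ z₂ : ℤ` and `k ≤ m`, the polynomial `∑ r, (z₁ + z₂ r).choose k • aᵣ xʳ`
is divisible by `p ^ (m - k)`. -/
theorem stmt0 {A : Type*} [CommRing A] [IsDomain A]
    (n m : ℕ) (a : ℕ → A) (p : Polynomial A)
    (hdiv : p ^ m ∣ ∑ r ∈ Finset.range (n + 1), Polynomial.C (a r) * Polynomial.X ^ r)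
    (z₁ z₂ : ℤ) (k : ℕ) (hk : k ≤ m) :
    p ^ (m - k) ∣ ∑ r ∈ Finset.range (n + 1),
      Polynomial.C (intChoose (z₁ + z₂ * (r : ℤ)) k • a r) * Polynomial.X ^ r :=
  stmt0_general n m a p hdiv z₁ z₂ k
end

section
/- Let $P'$ be a polytope in $N_\mathbb{R}$, $c_1, \dots, c_r \in M$, and $\mathbf{k}, \mathbf{a} \in \mathbb{N}^r$, and let $(b_1, \dots, b_r) = \partial(\mathbf{k})$. Assume that there is a common point $v \in P'$ at which $c_i$ attains its minimum over $P'$ for all indices $i$ with $b_i \ne 0$, and that $\sum_i k_i c_i = \sum_i b_i c_i$. Then $\eta_{P'}(\mathbf{a} + \mathbf{k}) = \eta_{P'}(\mathbf{k}) + \eta_{P'}(\partial(\mathbf{k}) + \mathbf{a})$, where $\eta_{P'}(\mathbf{k}) := \sum_{i=1}^r \eta_{P'}(k_i c_i) - \eta_{P'}(\sum_{i=1}^r k_i c_i)$ and $\eta_{P'}(c) = -\min_{v \in P'}\langle v, c \rangle$. -/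
open Pointwise


/-- The negated support function `η_P(c) = -min_{v∈P} ⟨v,c⟩` of a compact set. -/
noncomputable def etaSupp {V : Type*} [NormedAddCommGroup V] [NormedSpace ℝ V]
    (P : Set V) (c : V →L[ℝ] ℝ) : ℝ := -sInf (⇑c '' P)

lemma etaSupp_smul {V : Type*} [NormedAddCommGroup V] [NormedSpace ℝ V]
    (P : Set V) (c : V →L[ℝ] ℝ) {t : ℝ} (ht : 0 ≤ t) :
    etaSupp P (t • c) = t * etaSupp P c := by
  unfold etaSupp
  have himg : ⇑(t • c) '' P = t • (⇑c '' P) := by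
    rw [← Set.image_smul, ← Set.image_comp]; rfl
  rw [himg, Real.sInf_smul_of_nonneg ht, smul_eq_mul]
  ring

lemma etaSupp_of_min {V : Type*} [NormedAddCommGroup V] [NormedSpace ℝ V]
    (P : Set V) (c : V →L[ℝ] ℝ) {v : V} (hv : v ∈ P)
    (h : ∀ w ∈ P, c v ≤ c w) : etaSupp P c = -c v := by
  unfold etaSupp
  congr 1
  exact IsLeast.csInf_eq ⟨Set.mem_image_of_mem _ hv, by rintro _ ⟨w, hw, rfl⟩; exact h w hw⟩

/-- Additivity of the defect `η_{P'}(𝐤) = ∑ η_{P'}(kᵢcᵢ) - η_{P'}(∑ kᵢcᵢ)`: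
if all `cᵢ` with `bᵢ ≠ 0` (where `𝐛 = ∂(𝐤)`) attain their minimum over `P'` at a
common point `v`, and `∑ kᵢ cᵢ = ∑ bᵢ cᵢ`, then
`η_{P'}(𝐚+𝐤) = η_{P'}(𝐤) + η_{P'}(∂(𝐤)+𝐚)`. -/
theorem stmt11 {V : Type*} [NormedAddCommGroup V] [NormedSpace ℝ V]
    (P' : Set V) (hne : P'.Nonempty) (hcpt : IsCompact P')
    (r : ℕ) (c : Fin r → V →L[ℝ] ℝ) (k a b : Fin r → ℕ)
    (v : V) (hv : v ∈ P')
    (hmin : ∀ i, b i ≠ 0 → ∀ w ∈ P', c i v ≤ c i w)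
    (hsum : (∑ i, (k i : ℝ) • c i) = ∑ i, (b i : ℝ) • c i) :
    (∑ i, etaSupp P' (((a + k) i : ℝ) • c i)) - etaSupp P' (∑ i, ((a + k) i : ℝ) • c i)
      = ((∑ i, etaSupp P' ((k i : ℝ) • c i)) - etaSupp P' (∑ i, (k i : ℝ) • c i))
        + ((∑ i, etaSupp P' (((b + a) i : ℝ) • c i))
            - etaSupp P' (∑ i, ((b + a) i : ℝ) • c i)) := by
  have hsmul : ∀ (n m : ℕ) (f : V →L[ℝ] ℝ),
      etaSupp P' (((n + m : ℕ) : ℝ) • f) = etaSupp P' ((n : ℝ) • f) + etaSupp P' ((m : ℝ) • f) := by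
    intro n m f
    rw [etaSupp_smul P' f (by positivity : (0:ℝ) ≤ (n + m : ℕ)),
        etaSupp_smul P' f (by positivity : (0:ℝ) ≤ (n : ℕ)),
        etaSupp_smul P' f (by positivity : (0:ℝ) ≤ (m : ℕ))]
    push_cast
    ring
  -- each b i • c i is minimized at v
  have hminb : ∀ i, ∀ w ∈ P', ((b i : ℝ) • c i) v ≤ ((b i : ℝ) • c i) w := by
    intro i w hw
    rcases Nat.eq_zero_or_pos (b i) with h | h
    · simp [h]
    · simp only [ContinuousLinearMap.smul_apply, smul_eq_mul]
      exact mul_le_mul_of_nonneg_left (hmin i h.ne' w hw) (by positivity)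
  have hminsum : ∀ w ∈ P', (∑ i, (b i : ℝ) • c i) v ≤ (∑ i, (b i : ℝ) • c i) w := by
    intro w hw
    simp only [ContinuousLinearMap.sum_apply]
    exact Finset.sum_le_sum fun i _ => hminb i w hw
  have e4 : etaSupp P' (∑ i, (k i : ℝ) • c i) = ∑ i, etaSupp P' ((b i : ℝ) • c i) := by
    rw [hsum, etaSupp_of_min P' _ hv hminsum]
    rw [show (∑ i, (b i : ℝ) • c i) v = ∑ i, ((b i : ℝ) • c i) v from by
      simp [ContinuousLinearMap.sum_apply]]
    rw [neg_eq_iff_eq_neg, ← Finset.sum_neg_distrib]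
    refine Finset.sum_congr rfl fun i _ => ?_
    rw [etaSupp_of_min P' _ hv (hminb i), neg_neg]
  have e3 : etaSupp P' (∑ i, ((a + k) i : ℝ) • c i)
      = etaSupp P' (∑ i, ((b + a) i : ℝ) • c i) := by
    congr 1
    have : ∀ (x y : Fin r → ℕ), (∑ i, ((x + y) i : ℝ) • c i)
        = (∑ i, (x i : ℝ) • c i) + ∑ i, (y i : ℝ) • c i := by
      intro x y
      rw [← Finset.sum_add_distrib]
      refine Finset.sum_congr rfl fun i _ => ?_
      push_cast [Pi.add_apply]
      rw [add_smul]
    rw [this, this, hsum, add_comm]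
  have e1 : ∀ i, etaSupp P' (((a + k) i : ℝ) • c i)
      = etaSupp P' ((a i : ℝ) • c i) + etaSupp P' ((k i : ℝ) • c i) := fun i =>
    hsmul (a i) (k i) (c i)
  have e2 : ∀ i, etaSupp P' (((b + a) i : ℝ) • c i)
      = etaSupp P' ((b i : ℝ) • c i) + etaSupp P' ((a i : ℝ) • c i) := fun i =>
    hsmul (b i) (a i) (c i)
  rw [Finset.sum_congr rfl fun i _ => e1 i, Finset.sum_congr rfl fun i _ => e2 i,
      Finset.sum_add_distrib, Finset.sum_add_distrib, e3, e4]
  ring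
end

section
/- Let $(m, Q)$ be a pair with $m \in \widetilde{M} = M \oplus \mathbb{Z}$ and $Q \subset (\pi_M(m) = 0) \subset N_\mathbb{R}$ a lattice polytope such that for every $i \in \mathbb{N}$ with $P \cap (\varphi_m = i) \ne \emptyset$, the polytope $iQ$ is a Minkowski summand of $P \cap (\varphi_m = i)$ (a deformation pair of the lattice polytope $P$). Then there exist Laurent polynomials $f, g \in \mathbb{C}[N]$ with Newton polytopes $\Delta(f) = P$ and $\Delta(g) = Q$ such that $f$ is $(m,g)$-mutable. -/
open Pointwise

/-- Laurent polynomials `ℂ[N]` in `n` variables, `N ≅ ℤⁿ`. -/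
abbrev Laurent (n : ℕ) := AddMonoidAlgebra ℂ (Fin n → ℤ)

/-- Embedding of the lattice `N = ℤⁿ` into `N_ℝ = ℝⁿ`. -/
def emb {n : ℕ} (v : Fin n → ℤ) : Fin n → ℝ := fun i => (v i : ℝ)

/-- Lattice pairing. -/
def pairZ {n : ℕ} (c v : Fin n → ℤ) : ℤ := ∑ i, c i * v i

/-- The affine function `φ_m` attached to `m ∈ M ⊕ ℤ`. -/
def phiAff {n : ℕ} (m : (Fin n → ℤ) × ℤ) (v : Fin n → ℤ) : ℤ := pairZ m.1 v + m.2

/-- The graded piece of a Laurent polynomial supported on the slice `(φ_m = i)`. -/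
noncomputable def gradedPiece {n : ℕ} (m : (Fin n → ℤ) × ℤ) (i : ℤ) (f : Laurent n) :
    Laurent n :=
  AddMonoidAlgebra.ofCoeff (Finsupp.filter (fun v => phiAff m v = i) f.coeff)

/-- The Newton polytope `Δ(f)` of a Laurent polynomial. -/
noncomputable def newton {n : ℕ} (f : Laurent n) : Set (Fin n → ℝ) :=
  convexHull ℝ (emb '' (f.coeff.support : Set (Fin n → ℤ)))

/-- `f` is `(m,g)`-mutable: `Δ(g) ⊆ (π_M(m) = 0)` and `g^i` divides the graded piece
`f_i` for every `i ≥ 0`. -/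
def IsMGMutable {n : ℕ} (f g : Laurent n) (m : (Fin n → ℤ) × ℤ) : Prop :=
  (∀ v ∈ g.coeff.support, pairZ m.1 v = 0) ∧ ∀ i : ℕ, g ^ i ∣ gradedPiece m (i : ℤ) f

/-- The real slice `P ∩ (φ_m = i)`. -/
def realSlice {n : ℕ} (P : Set (Fin n → ℝ)) (m : (Fin n → ℤ) × ℤ) (i : ℝ) :
    Set (Fin n → ℝ) :=
  {x ∈ P | (∑ j, (m.1 j : ℝ) * x j) + (m.2 : ℝ) = i}

/-!
Take `g = ∑_{w ∈ VQ} X^w` and `f = ∑_{φ_m(v) < 0} X^v + ∑_{i ≥ 0} g^i g_i'`, where `g_i'` is the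
sum of the monomials `X^u` with `φ_m(u) = i` and `u + iQ ⊆ P`. Divisibility of `f_i = g^i g_i'`
and `Δ(f) ⊆ P` hold by construction. Since all coefficients are nonnegative reals, no monomial
cancels, so for `P ⊆ Δ(f)` it suffices to find every vertex `v` of `P` in one summand. If
`φ_m(v) = i ≥ 0`, then `v` is a vertex of the slice `iQ + R`, hence `v = i w + u` with `w` a
vertex of `Q` and `u ∈ R`; then `u + iQ` lies in the slice, so `X^u` occurs in `g_i'` and `X^v`
in `g^i g_i'`.
-/

open scoped NNReal

namespace AddMonoidAlgebra

variable {R M : Type*}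

section CanonicallyOrdered

variable [Semiring R] [PartialOrder R] [CanonicallyOrderedAdd R]

theorem coeff_mul_le_coeff_mul_add [Add M] (f g : AddMonoidAlgebra R M) (a b : M) :
    f.coeff a * g.coeff b ≤ (f * g).coeff (a + b) := by
  classical
  by_cases ha : a ∈ f.coeff.support
  · by_cases hb : b ∈ g.coeff.support
    · rw [coeff_mul, Finsupp.sum]
      refine le_trans ?_ (Finset.single_le_sum (fun _ _ => zero_le) ha)
      rw [Finsupp.sum]
      refine le_trans ?_ (Finset.single_le_sum (fun _ _ => zero_le) hb)
      simp
    · simp [Finsupp.notMem_support_iff.1 hb]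
  · simp [Finsupp.notMem_support_iff.1 ha]

variable [NoZeroDivisors R]

theorem add_mem_support_mul [Add M] {f g : AddMonoidAlgebra R M} {a b : M}
    (ha : a ∈ f.coeff.support) (hb : b ∈ g.coeff.support) :
    a + b ∈ (f * g).coeff.support := by
  rw [Finsupp.mem_support_iff] at *
  intro h
  have := coeff_mul_le_coeff_mul_add f g a b
  rw [h, nonpos_iff_eq_zero] at this
  exact mul_ne_zero ha hb this

theorem nsmul_mem_support_pow [AddMonoid M] [Nontrivial R] {f : AddMonoidAlgebra R M} {a : M}
    (ha : a ∈ f.coeff.support) (k : ℕ) : k • a ∈ (f ^ k).coeff.support := by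
  induction k with
  | zero => simp [one_def]
  | succ k ih => simpa [pow_succ, succ_nsmul] using add_mem_support_mul ih ha

end CanonicallyOrdered

theorem support_pow_subset [Semiring R] [AddMonoid M] (f : AddMonoidAlgebra R M) (S : ℕ → Set M)
    (h0 : 0 ∈ S 0) (hS : ∀ k a b, a ∈ S k → b ∈ f.coeff.support → a + b ∈ S (k + 1)) (k : ℕ) :
    ↑(f ^ k).coeff.support ⊆ S k := by
  classical
  induction k with
  | zero =>
    intro a ha
    rw [pow_zero, one_def, coeff_single] at ha
    rw [Finset.mem_singleton.1 (Finsupp.support_single_subset ha)]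
    exact h0
  | succ k ih =>
    intro c hc
    obtain ⟨a, ha, b, hb, rfl⟩ :=
      Finset.mem_add.1 (support_coeff_mul_subset _ _ (pow_succ f k ▸ hc))
    exact hS k a b (ih ha) hb

theorem support_mapRingHom {S : Type*} [Semiring R] [Semiring S] [AddMonoid M] {φ : R →+* S}
    (hφ : Function.Injective φ) (f : AddMonoidAlgebra R M) :
    (mapRingHom M φ f).coeff.support = f.coeff.support := by
  simpa [coe_mapRingHom] using Finsupp.support_mapRange_of_injective φ.map_zero f.coeff hφ

noncomputable def monomialSum [Semiring R] (s : Finset M) : AddMonoidAlgebra R M :=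
  ∑ v ∈ s, single v 1

theorem support_monomialSum [Semiring R] [Nontrivial R] (s : Finset M) :
    (monomialSum s : AddMonoidAlgebra R M).coeff.support = s := by
  classical
  ext u
  simp [monomialSum, coeff_sum, Finsupp.finsetSum_apply, coeff_single, Finsupp.single_apply]

end AddMonoidAlgebra

section ExtremePoints

variable {E : Type*} [AddCommGroup E] [Module ℝ E]

theorem mem_extremePoints_of_add_mem_extremePoints_add {A B : Set E} {a b : E}
    (hab : a + b ∈ (A + B).extremePoints ℝ) (ha : a ∈ A) (hb : b ∈ B) :
    a ∈ A.extremePoints ℝ := by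
  refine ⟨ha, fun x₁ h₁ x₂ h₂ hx => ?_⟩
  have hxb : a + b ∈ openSegment ℝ (x₁ + b) (x₂ + b) := by
    simpa only [add_comm _ b] using (mem_openSegment_translate ℝ b).2 hx
  exact add_right_cancel (hab.2 (Set.add_mem_add h₁ hb) (Set.add_mem_add h₂ hb) hxb)

theorem extremePoints_smul {c : ℝ} (hc : c ≠ 0) (s : Set E) :
    (c • s).extremePoints ℝ = c • s.extremePoints ℝ := by
  simpa [Set.image_smul] using (image_extremePoints (LinearEquiv.smulOfNeZero ℝ E c hc) s).symm

theorem exists_sub_smul_mem_of_mem_extremePoints {S R : Set E} (hS : S.Nonempty) {c : ℝ}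
    {x : E} (hx : x ∈ (c • convexHull ℝ S + R).extremePoints ℝ) : ∃ q ∈ S, x - c • q ∈ R := by
  obtain ⟨a, ha, r, hr, rfl⟩ := hx.1
  have ha_ext := mem_extremePoints_of_add_mem_extremePoints_add hx ha hr
  rcases eq_or_ne c 0 with rfl | hc
  · rw [Set.zero_smul_set (convexHull_nonempty_iff.2 hS), Set.mem_zero] at ha
    obtain ⟨q, hq⟩ := hS
    exact ⟨q, hq, by simpa [ha] using hr⟩
  · rw [extremePoints_smul hc] at ha_ext
    obtain ⟨q, hq, rfl⟩ := ha_ext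
    exact ⟨q, extremePoints_convexHull_subset hq, by simpa using hr⟩

variable [TopologicalSpace E] [T2Space E] [IsTopologicalAddGroup E] [ContinuousSMul ℝ E]
  [LocallyConvexSpace ℝ E]

theorem convexHull_eq_of_extremePoints_subset {s t : Set E} (hs : s.Finite) (ht : t.Finite)
    (hts : t ⊆ convexHull ℝ s) (hext : (convexHull ℝ s).extremePoints ℝ ⊆ t) :
    convexHull ℝ t = convexHull ℝ s := by
  refine (convexHull_min hts (convex_convexHull ℝ s)).antisymm ?_
  calc convexHull ℝ s = closure (convexHull ℝ ((convexHull ℝ s).extremePoints ℝ)) :=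
        (closure_convexHull_extremePoints (hs.isCompact_convexHull (𝕜 := ℝ))
          (convex_convexHull ℝ s)).symm
    _ ⊆ closure (convexHull ℝ t) := closure_mono (convexHull_mono hext)
    _ = convexHull ℝ t := (ht.isCompact_convexHull (𝕜 := ℝ)).isClosed.closure_eq

end ExtremePoints

section Lattice

variable {n : ℕ}

theorem emb_add (a b : Fin n → ℤ) : emb (a + b) = emb a + emb b := by
  funext j; simp [emb]

theorem emb_sub (a b : Fin n → ℤ) : emb (a - b) = emb a - emb b := by
  funext j; simp [emb]

theorem emb_nsmul (k : ℕ) (a : Fin n → ℤ) : emb (k • a) = (k : ℝ) • emb a := by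
  funext j; simp [emb]

theorem emb_zero : emb (0 : Fin n → ℤ) = 0 := by
  funext j; simp [emb]

theorem pairZ_add (c a b : Fin n → ℤ) : pairZ c (a + b) = pairZ c a + pairZ c b :=
  dotProduct_add c a b

theorem pairZ_sub (c a b : Fin n → ℤ) : pairZ c (a - b) = pairZ c a - pairZ c b :=
  dotProduct_sub c a b

theorem pairZ_nsmul (c a : Fin n → ℤ) (k : ℕ) : pairZ c (k • a) = k * pairZ c a := by
  simp [pairZ, Finset.mul_sum, mul_left_comm]

theorem emb_mem_realSlice_iff {P : Set (Fin n → ℝ)} {m : (Fin n → ℤ) × ℤ} {v : Fin n → ℤ}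
    {i : ℝ} : emb v ∈ realSlice P m i ↔ emb v ∈ P ∧ (phiAff m v : ℝ) = i := by
  simp [realSlice, phiAff, pairZ, emb]

abbrev latticeHull (V : Finset (Fin n → ℤ)) : Set (Fin n → ℝ) :=
  convexHull ℝ (emb '' (V : Set (Fin n → ℤ)))

theorem emb_mem_latticeHull {V : Finset (Fin n → ℤ)} {v : Fin n → ℤ} (hv : v ∈ V) :
    emb v ∈ latticeHull V :=
  subset_convexHull ℝ _ ⟨v, hv, rfl⟩

end Lattice

section GradedPiece

variable {n : ℕ} (m : (Fin n → ℤ) × ℤ) (i : ℤ)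

theorem gradedPiece_add (f g : Laurent n) :
    gradedPiece m i (f + g) = gradedPiece m i f + gradedPiece m i g := by
  ext v; simp [gradedPiece, Finsupp.filter_apply]

theorem gradedPiece_sum {ι : Type*} (s : Finset ι) (f : ι → Laurent n) :
    gradedPiece m i (∑ j ∈ s, f j) = ∑ j ∈ s, gradedPiece m i (f j) :=
  map_sum (AddMonoidHom.mk' (gradedPiece m i) (gradedPiece_add m i)) f s

variable {m i}

theorem gradedPiece_eq_self {f : Laurent n} (hf : ∀ v ∈ f.coeff.support, phiAff m v = i) :
    gradedPiece m i f = f := by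
  rw [gradedPiece, (Finsupp.filter_eq_self_iff _ _).2 fun v hv =>
    hf v (Finsupp.mem_support_iff.2 hv), AddMonoidAlgebra.ofCoeff_coeff]

theorem gradedPiece_eq_zero {f : Laurent n} (hf : ∀ v ∈ f.coeff.support, phiAff m v ≠ i) :
    gradedPiece m i f = 0 := by
  rw [gradedPiece, (Finsupp.filter_eq_zero_iff _ _).2 fun v hv => by
    by_contra h0; exact hf v (Finsupp.mem_support_iff.2 h0) hv]
  rfl

end GradedPiece

section Construction

open AddMonoidAlgebra

abbrev NNLaurent (n : ℕ) := AddMonoidAlgebra ℝ≥0 (Fin n → ℤ)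

variable {n : ℕ} (m : (Fin n → ℤ) × ℤ) (VP VQ : Finset (Fin n → ℤ))

/-- The slice condition in the definition of a deformation pair `(m, Q)` of `P`. -/
def IsSliceSummand (P Q : Set (Fin n → ℝ)) : Prop :=
  ∀ i : ℕ, (realSlice P m i).Nonempty → ∃ R : Set (Fin n → ℝ), R.Nonempty ∧
    realSlice P m i = (i : ℝ) • Q + R

/-- The support of the cofactor `g_i'`: lattice points `u` with `φ_m(u) = i` and `u + iQ ⊆ P`.
Restricting to the candidates `v - i • w` (`v ∈ VP`, `w ∈ VQ`) keeps it finite and still reaches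
every vertex of `P` on the slice. -/
noncomputable def cofactorSupport (i : ℕ) : Finset (Fin n → ℤ) :=
  open Classical in
  ((VP.filter fun v => phiAff m v = i).image₂ (fun v w => v - i • w) VQ).filter fun u =>
    phiAff m u = i ∧ ∀ x ∈ (i : ℝ) • latticeHull VQ, emb u + x ∈ latticeHull VP

noncomputable def mutableWitness : NNLaurent n :=
  open Classical in
  monomialSum (VP.filter fun v => phiAff m v < 0) +
    ∑ i ∈ VP.image fun v => (phiAff m v).toNat,
      monomialSum VQ ^ i * monomialSum (cofactorSupport m VP VQ i)

noncomputable abbrev toLaurent : NNLaurent n →+* Laurent n :=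
  mapRingHom _ (algebraMap ℝ≥0 ℂ)

theorem support_toLaurent (f : NNLaurent n) :
    (toLaurent f).coeff.support = f.coeff.support :=
  support_mapRingHom (Complex.ofReal_injective.comp NNReal.coe_injective) f

variable {m VP VQ}

theorem support_pow_monomialSum (hVQ : VQ.Nonempty) (hQ : ∀ w ∈ VQ, pairZ m.1 w = 0) (k : ℕ) :
    ↑((monomialSum VQ : NNLaurent n) ^ k).coeff.support ⊆
      {a | pairZ m.1 a = 0 ∧ emb a ∈ (k : ℝ) • latticeHull VQ} := by
  refine support_pow_subset _ (fun k => {a | pairZ m.1 a = 0 ∧ emb a ∈ (k : ℝ) • latticeHull VQ})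
    ⟨by simp [pairZ], ?_⟩ (fun k a b ⟨ha, ha'⟩ hb => ⟨?_, ?_⟩) k
  · obtain ⟨w, hw⟩ := hVQ
    simpa [emb_zero] using Set.smul_mem_smul_set (a := (0 : ℝ)) (emb_mem_latticeHull hw)
  · rw [support_monomialSum] at hb
    simp [pairZ_add, ha, hQ b hb]
  · rw [support_monomialSum] at hb
    rw [emb_add, Nat.cast_succ, (convex_convexHull ℝ _).add_smul k.cast_nonneg zero_le_one,
      one_smul]
    exact Set.add_mem_add ha' (emb_mem_latticeHull hb)

theorem mem_support_pow_mul_cofactor (hVQ : VQ.Nonempty) (hQ : ∀ w ∈ VQ, pairZ m.1 w = 0)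
    {k : ℕ} {a : Fin n → ℤ}
    (ha : a ∈ ((monomialSum VQ : NNLaurent n) ^ k *
      monomialSum (cofactorSupport m VP VQ k)).coeff.support) :
    phiAff m a = k ∧ emb a ∈ latticeHull VP := by
  classical
  obtain ⟨b, hb, u, hu, rfl⟩ := Finset.mem_add.1 (support_coeff_mul_subset _ _ ha)
  obtain ⟨hb₀, hbQ⟩ := support_pow_monomialSum hVQ hQ k hb
  rw [support_monomialSum, cofactorSupport, Finset.mem_filter] at hu
  obtain ⟨-, hu₀, huP⟩ := hu
  refine ⟨?_, ?_⟩
  · rw [← hu₀, phiAff, phiAff, pairZ_add, hb₀, zero_add]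
  · rw [emb_add, add_comm]
    exact huP _ hbQ

theorem cofactorSupport_eq_empty {k : ℕ} (hk : k ∉ VP.image fun v => (phiAff m v).toNat) :
    cofactorSupport m VP VQ k = ∅ := by
  have : (VP.filter fun v => phiAff m v = k) = ∅ :=
    Finset.filter_eq_empty_iff.2 fun v hv hvk => hk (Finset.mem_image.2 ⟨v, hv, by simp [hvk]⟩)
  simp [cofactorSupport, this]

theorem gradedPiece_mutableWitness (hVQ : VQ.Nonempty) (hQ : ∀ w ∈ VQ, pairZ m.1 w = 0) (k : ℕ) :
    gradedPiece m k (toLaurent (mutableWitness m VP VQ)) =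
      toLaurent (monomialSum VQ ^ k * monomialSum (cofactorSupport m VP VQ k)) := by
  classical
  have hneg : gradedPiece m k (toLaurent (monomialSum (VP.filter fun v => phiAff m v < 0))) = 0 :=
    gradedPiece_eq_zero fun v hv => by
      rw [support_toLaurent, support_monomialSum, Finset.mem_filter] at hv
      omega
  have hpiece (i : ℕ) :
      gradedPiece m k (toLaurent (monomialSum VQ ^ i * monomialSum (cofactorSupport m VP VQ i))) =
        if i = k then toLaurent (monomialSum VQ ^ k * monomialSum (cofactorSupport m VP VQ k))
        else 0 := by
    split_ifs with hik
    · subst hik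
      exact gradedPiece_eq_self fun v hv =>
        (mem_support_pow_mul_cofactor hVQ hQ (support_toLaurent _ ▸ hv)).1
    · refine gradedPiece_eq_zero fun v hv hvk => hik ?_
      have := (mem_support_pow_mul_cofactor hVQ hQ (support_toLaurent _ ▸ hv)).1
      exact_mod_cast this.symm.trans hvk
  rw [mutableWitness, map_add, map_sum, gradedPiece_add, gradedPiece_sum, hneg, zero_add,
    Finset.sum_congr rfl fun i _ => hpiece i, Finset.sum_ite_eq']
  split_ifs with hk
  · rfl
  · simp [cofactorSupport_eq_empty hk, monomialSum]

theorem emb_mem_of_mem_support_mutableWitness (hVQ : VQ.Nonempty)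
    (hQ : ∀ w ∈ VQ, pairZ m.1 w = 0) {a : Fin n → ℤ}
    (ha : a ∈ (mutableWitness m VP VQ).coeff.support) : emb a ∈ latticeHull VP := by
  classical
  rw [mutableWitness, coeff_add, coeff_sum] at ha
  rcases Finset.mem_union.1 (Finsupp.support_add ha) with ha | ha
  · rw [support_monomialSum] at ha
    exact emb_mem_latticeHull (Finset.mem_filter.1 ha).1
  · obtain ⟨i, -, hi⟩ := Finsupp.mem_support_finsetSum a ha
    exact (mem_support_pow_mul_cofactor hVQ hQ hi).2

theorem exists_sub_nsmul_mem_cofactorSupport (hVQ : VQ.Nonempty)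
    (hQ : ∀ w ∈ VQ, pairZ m.1 w = 0) (hPQ : IsSliceSummand m (latticeHull VP) (latticeHull VQ))
    {v : Fin n → ℤ} (hvP : v ∈ VP) (hv : emb v ∈ (latticeHull VP).extremePoints ℝ) {k : ℕ}
    (hk : phiAff m v = k) : ∃ w ∈ VQ, v - k • w ∈ cofactorSupport m VP VQ k := by
  classical
  have hslice : emb v ∈ realSlice (latticeHull VP) m k :=
    emb_mem_realSlice_iff.2 ⟨extremePoints_subset hv, by exact_mod_cast hk⟩
  obtain ⟨R, -, hR⟩ := hPQ k ⟨_, hslice⟩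
  have hext : emb v ∈ (realSlice (latticeHull VP) m k).extremePoints ℝ :=
    inter_extremePoints_subset_extremePoints_of_subset (fun x hx => hx.1) ⟨hslice, hv⟩
  rw [hR] at hext
  obtain ⟨_, ⟨w, hw, rfl⟩, hwR⟩ := exists_sub_smul_mem_of_mem_extremePoints
    ((Finset.coe_nonempty.2 hVQ).image emb) hext
  refine ⟨w, hw, Finset.mem_filter.2
    ⟨Finset.mem_image₂.2 ⟨v, Finset.mem_filter.2 ⟨hvP, hk⟩, w, hw, rfl⟩, ?_, fun x hx => ?_⟩⟩
  · rw [phiAff, pairZ_sub, pairZ_nsmul, hQ w hw, ← hk, phiAff]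
    ring
  · have : emb (v - k • w) + x ∈ realSlice (latticeHull VP) m k := by
      rw [hR, add_comm (emb _) x, emb_sub, emb_nsmul]
      exact Set.add_mem_add hx hwR
    exact this.1

theorem mem_support_mutableWitness (hVQ : VQ.Nonempty)
    (hQ : ∀ w ∈ VQ, pairZ m.1 w = 0) (hPQ : IsSliceSummand m (latticeHull VP) (latticeHull VQ))
    {v : Fin n → ℤ} (hvP : v ∈ VP) (hv : emb v ∈ (latticeHull VP).extremePoints ℝ) :
    v ∈ (mutableWitness m VP VQ).coeff.support := by
  classical
  rw [mutableWitness, coeff_add, coeff_sum]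
  rcases lt_or_ge (phiAff m v) 0 with hneg | hnonneg
  · refine Finsupp.support_mono le_self_add ?_
    rw [support_monomialSum]
    exact Finset.mem_filter.2 ⟨hvP, hneg⟩
  · set k := (phiAff m v).toNat
    have hk : phiAff m v = k := (Int.toNat_of_nonneg hnonneg).symm
    obtain ⟨w, hw, hu⟩ := exists_sub_nsmul_mem_cofactorSupport hVQ hQ hPQ hvP hv hk
    refine Finsupp.support_mono le_add_self (Finsupp.support_mono
      (Finset.single_le_sum (fun _ _ => zero_le) (Finset.mem_image_of_mem _ hvP)) ?_)
    have hw' : w ∈ (monomialSum VQ : NNLaurent n).coeff.support := by rwa [support_monomialSum]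
    have hu' : v - k • w ∈
        (monomialSum (cofactorSupport m VP VQ k) : NNLaurent n).coeff.support := by
      rwa [support_monomialSum]
    simpa using add_mem_support_mul (nsmul_mem_support_pow hw' k) hu'

theorem newton_mutableWitness (hVQ : VQ.Nonempty)
    (hQ : ∀ w ∈ VQ, pairZ m.1 w = 0) (hPQ : IsSliceSummand m (latticeHull VP) (latticeHull VQ)) :
    newton (toLaurent (mutableWitness m VP VQ)) = latticeHull VP := by
  rw [newton, support_toLaurent]
  refine convexHull_eq_of_extremePoints_subset (VP.finite_toSet.image emb)
    ((Finset.finite_toSet _).image emb) ?_ fun x hx => ?_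
  · rintro _ ⟨a, ha, rfl⟩
    exact emb_mem_of_mem_support_mutableWitness hVQ hQ ha
  · obtain ⟨v, hv, rfl⟩ := extremePoints_convexHull_subset hx
    exact ⟨v, mem_support_mutableWitness hVQ hQ hPQ hv hx, rfl⟩

end Construction

theorem stmt14_general (n : ℕ) (m : (Fin n → ℤ) × ℤ)
    (VP VQ : Finset (Fin n → ℤ)) (hVQ : VQ.Nonempty)
    (hQhyp : ∀ w ∈ VQ, pairZ m.1 w = 0)
    (hdef : ∀ i : ℕ,
      (realSlice (convexHull ℝ (emb '' (VP : Set (Fin n → ℤ)))) m (i : ℝ)).Nonempty →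
      ∃ R : Set (Fin n → ℝ), R.Nonempty ∧
        realSlice (convexHull ℝ (emb '' (VP : Set (Fin n → ℤ)))) m (i : ℝ)
          = (i : ℝ) • (convexHull ℝ (emb '' (VQ : Set (Fin n → ℤ)))) + R) :
    ∃ f g : Laurent n,
      newton f = convexHull ℝ (emb '' (VP : Set (Fin n → ℤ))) ∧
      newton g = convexHull ℝ (emb '' (VQ : Set (Fin n → ℤ))) ∧
      IsMGMutable f g m := by
  refine ⟨toLaurent (mutableWitness m VP VQ), toLaurent (AddMonoidAlgebra.monomialSum VQ),
    newton_mutableWitness hVQ hQhyp hdef, ?_, fun w hw => ?_, fun k => ?_⟩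
  · rw [newton, support_toLaurent, AddMonoidAlgebra.support_monomialSum]
  · rw [support_toLaurent, AddMonoidAlgebra.support_monomialSum] at hw
    exact hQhyp w hw
  · rw [gradedPiece_mutableWitness hVQ hQhyp, map_mul, map_pow]
    exact dvd_mul_right _ _

/-- If `(m, Q)` is a deformation pair of the lattice polytope `P` (i.e. `Q` is a lattice
polytope in the hyperplane `(π_M(m)=0)` and for every `i ∈ ℕ` with `P ∩ (φ_m = i) ≠ ∅`
the dilate `iQ` is a Minkowski summand of `P ∩ (φ_m = i)`), then there exist Laurent
polynomials `f, g` with `Δ(f) = P`, `Δ(g) = Q` and `f` `(m,g)`-mutable. -/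
theorem stmt14 (n : ℕ) (m : (Fin n → ℤ) × ℤ)
    (VP VQ : Finset (Fin n → ℤ)) (hVP : VP.Nonempty) (hVQ : VQ.Nonempty)
    (hQhyp : ∀ w ∈ VQ, pairZ m.1 w = 0)
    (hdef : ∀ i : ℕ,
      (realSlice (convexHull ℝ (emb '' (VP : Set (Fin n → ℤ)))) m (i : ℝ)).Nonempty →
      ∃ R : Set (Fin n → ℝ), R.Nonempty ∧
        realSlice (convexHull ℝ (emb '' (VP : Set (Fin n → ℤ)))) m (i : ℝ)
          = (i : ℝ) • (convexHull ℝ (emb '' (VQ : Set (Fin n → ℤ)))) + R) :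
    ∃ f g : Laurent n,
      newton f = convexHull ℝ (emb '' (VP : Set (Fin n → ℤ))) ∧
      newton g = convexHull ℝ (emb '' (VQ : Set (Fin n → ℤ))) ∧
      IsMGMutable f g m :=
  stmt14_general n m VP VQ hVQ hQhyp hdef
end
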